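/- arXiv:1904.02580 — 3 statements merged into one kernel-verified Lean document; each statement's English description precedes it below -/
import Mathlib

section
/- Let ℓ(x, D) = inf_{α ∈ ℝ^k} (1/2)‖x − Dα‖² + λ‖α‖₁. Then for every fixed x ∈ ℝ^m, the map D ↦ ℓ(x, D) is Lipschitz continuous on any bounded subset 𝒟 of ℝ^{m×k} when x ranges over a bounded set 𝒳 ⊂ ℝ^m, with a Lipschitz constant depending only on the bounds of 𝒳 and 𝒟 and on λ. -/
/-! The objective `½‖x − Dα‖² + λ‖α‖₁` at `α = 0` equals `½‖x‖²`, so any `α` with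
`λ‖α‖₁ > ½‖x‖²` can be discarded: the infimum may be taken over the ℓ¹-ball of radius
`A = R_x² / (2λ)`. On that ball, and for `‖D‖ ≤ R_D`, the residual `x − Dα` is `A`-Lipschitz in `D`
and stays in the ball of radius `R_x + R_D A`, on which `½‖·‖²` is `(R_x + R_D A)`-Lipschitz.
An infimum of uniformly Lipschitz functions is Lipschitz with the same constant. -/

open Matrix

/-- ℓ¹ norm of a finite vector. -/
def l1 {k : ℕ} (v : Fin k → ℝ) : ℝ := ∑ j, |v j|

/-- Euclidean norm of a finite vector. -/
noncomputable def e2 {m : ℕ} (v : Fin m → ℝ) : ℝ := Real.sqrt (∑ i, v i ^ 2)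

/-- View a Euclidean vector indexed by `Fin m × Fin k` as an `m × k` matrix. -/
def toMat {m k : ℕ} (D : EuclideanSpace ℝ (Fin m × Fin k)) : Matrix (Fin m) (Fin k) ℝ :=
  Matrix.of fun i j => D (i, j)

/-- Per-sample approximation error `ℓ(x, D) = inf_α ½‖x − Dα‖² + λ‖α‖₁`. -/
noncomputable def ellLoss {m k : ℕ} (lam : ℝ) (x : Fin m → ℝ)
    (D : Matrix (Fin m) (Fin k) ℝ) : ℝ :=
  ⨅ α : Fin k → ℝ, ((1 : ℝ) / 2) * e2 (x - D.mulVec α) ^ 2 + lam * l1 α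

open NNReal Set

theorem ciInf_subtype_eq_ciInf {ι α : Type*} [ConditionallyCompleteLinearOrder α] {f : ι → α}
    {p : ι → Prop} (hf : BddBelow (range f)) {i₀ : ι} (hi₀ : p i₀)
    (h : ∀ i, ¬p i → f i₀ ≤ f i) : ⨅ i : Subtype p, f i = ⨅ i, f i := by
  have : Nonempty ι := ⟨i₀⟩
  have : Nonempty (Subtype p) := ⟨⟨i₀, hi₀⟩⟩
  have hfp : BddBelow (range fun i : Subtype p => f i) :=
    hf.mono (range_comp_subset_range Subtype.val _)
  refine le_antisymm (le_ciInf fun i => ?_) (le_ciInf fun i => ciInf_le hf i)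
  by_cases hi : p i
  · exact ciInf_le hfp ⟨i, hi⟩
  · exact (ciInf_le hfp ⟨i₀, hi₀⟩).trans (h i hi)

theorem LipschitzOnWith.ciInf {ι α : Type*} [Nonempty ι] [PseudoMetricSpace α] {f : ι → α → ℝ}
    {K : ℝ≥0} {s : Set α} (hf : ∀ i, LipschitzOnWith K (f i) s)
    (hbdd : ∀ x ∈ s, BddBelow (range fun i => f i x)) :
    LipschitzOnWith K (fun x => ⨅ i, f i x) s :=
  LipschitzOnWith.of_le_add_mul K fun x hx y hy => by
    rw [← sub_le_iff_le_add]
    exact le_ciInf fun i => sub_le_iff_le_add.2 <|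
      (ciInf_le (hbdd x hx) i).trans ((hf i).le_add_mul hx hy)

theorem lipschitzOnWith_half_sq_norm {E : Type*} [SeminormedAddCommGroup E] (R : ℝ≥0) :
    LipschitzOnWith R (fun u : E => 1 / 2 * ‖u‖ ^ 2) (Metric.closedBall 0 R) := by
  refine LipschitzOnWith.of_dist_le_mul fun u hu v hv => ?_
  rw [mem_closedBall_zero_iff] at hu hv
  have hsq : 1 / 2 * ‖u‖ ^ 2 - 1 / 2 * ‖v‖ ^ 2 = (‖u‖ - ‖v‖) * ((‖u‖ + ‖v‖) / 2) := by ring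
  rw [Real.dist_eq, hsq, abs_mul, abs_of_nonneg (a := (‖u‖ + ‖v‖) / 2) (by positivity),
    dist_eq_norm, mul_comm]
  gcongr
  · linarith
  · exact abs_norm_sub_norm_le u v

theorem e2_eq_norm {m : ℕ} (v : Fin m → ℝ) :
    e2 v = ‖(WithLp.toLp 2 v : EuclideanSpace ℝ (Fin m))‖ := by
  simp [e2, EuclideanSpace.norm_eq]

theorem l1_nonneg {k : ℕ} (v : Fin k → ℝ) : 0 ≤ l1 v :=
  Finset.sum_nonneg fun _ _ => abs_nonneg _

theorem e2_sub_le {m : ℕ} (u v : Fin m → ℝ) : e2 (u - v) ≤ e2 u + e2 v := by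
  simpa only [e2_eq_norm, WithLp.toLp_sub] using norm_sub_le _ _

theorem e2_col_le_norm {m k : ℕ} (D : EuclideanSpace ℝ (Fin m × Fin k)) (j : Fin k) :
    e2 (fun i => toMat D i j) ≤ ‖D‖ := by
  rw [EuclideanSpace.norm_eq, Fintype.sum_prod_type]
  refine Real.sqrt_le_sqrt (Finset.sum_le_sum fun i _ => ?_)
  simpa [toMat] using
    Finset.single_le_sum (f := fun j' => D (i, j') ^ 2) (fun _ _ => sq_nonneg _) (Finset.mem_univ j)

theorem e2_mulVec_le {m k : ℕ} (D : EuclideanSpace ℝ (Fin m × Fin k)) (α : Fin k → ℝ) :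
    e2 (toMat D *ᵥ α) ≤ l1 α * ‖D‖ := by
  have hcols : (WithLp.toLp 2 (toMat D *ᵥ α) : EuclideanSpace ℝ (Fin m)) =
      ∑ j, α j • WithLp.toLp 2 (fun i => toMat D i j) := by
    ext i
    simp [Matrix.mulVec, dotProduct, mul_comm]
  rw [e2_eq_norm, hcols, l1, Finset.sum_mul]
  refine (norm_sum_le _ _).trans (Finset.sum_le_sum fun j _ => ?_)
  rw [norm_smul, Real.norm_eq_abs, ← e2_eq_norm]
  gcongr
  exact e2_col_le_norm D j

noncomputable def lassoObjective {m k : ℕ} (lam : ℝ) (x : Fin m → ℝ)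
    (D : Matrix (Fin m) (Fin k) ℝ) (α : Fin k → ℝ) : ℝ :=
  1 / 2 * e2 (x - D *ᵥ α) ^ 2 + lam * l1 α

theorem lassoObjective_zero {m k : ℕ} (lam : ℝ) (x : Fin m → ℝ) (D : Matrix (Fin m) (Fin k) ℝ) :
    lassoObjective lam x D 0 = 1 / 2 * e2 x ^ 2 := by
  simp [lassoObjective, l1]

theorem mul_l1_le_lassoObjective {m k : ℕ} (lam : ℝ) (x : Fin m → ℝ)
    (D : Matrix (Fin m) (Fin k) ℝ) (α : Fin k → ℝ) : lam * l1 α ≤ lassoObjective lam x D α :=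
  le_add_of_nonneg_left (by positivity)

theorem bddBelow_range_lassoObjective {m k : ℕ} {lam : ℝ} (hlam : 0 ≤ lam) (x : Fin m → ℝ)
    (D : Matrix (Fin m) (Fin k) ℝ) : BddBelow (range (lassoObjective lam x D)) := by
  refine ⟨0, ?_⟩
  rintro _ ⟨α, rfl⟩
  exact (mul_nonneg hlam (l1_nonneg α)).trans (mul_l1_le_lassoObjective lam x D α)

theorem ellLoss_eq_ciInf_l1_le {m k : ℕ} {lam : ℝ} (hlam : 0 < lam) {x : Fin m → ℝ} {A : ℝ}
    (hA : 1 / 2 * e2 x ^ 2 ≤ lam * A) (D : Matrix (Fin m) (Fin k) ℝ) :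
    ellLoss lam x D = ⨅ α : {α // l1 α ≤ A}, lassoObjective lam x D α.1 := by
  have hA0 : 0 ≤ A :=
    nonneg_of_mul_nonneg_right ((by positivity : (0 : ℝ) ≤ 1 / 2 * e2 x ^ 2).trans hA) hlam
  refine (ciInf_subtype_eq_ciInf (bddBelow_range_lassoObjective hlam.le x D)
    (show l1 (0 : Fin k → ℝ) ≤ A by simpa [l1] using hA0) fun α hα => ?_).symm
  calc lassoObjective lam x D 0 = 1 / 2 * e2 x ^ 2 := lassoObjective_zero lam x D
    _ ≤ lam * l1 α := hA.trans (by gcongr; exact (not_le.1 hα).le)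
    _ ≤ lassoObjective lam x D α := mul_l1_le_lassoObjective lam x D α

theorem lipschitzOnWith_lassoObjective {m k : ℕ} (lam : ℝ) {x : Fin m → ℝ} {Rx RD A : ℝ≥0}
    (hx : e2 x ≤ Rx) {α : Fin k → ℝ} (hα : l1 α ≤ A) :
    LipschitzOnWith ((Rx + RD * A) * A) (fun D => lassoObjective lam x (toMat D) α)
      {D | ‖D‖ ≤ RD} := by
  let residual (D : EuclideanSpace ℝ (Fin m × Fin k)) : EuclideanSpace ℝ (Fin m) :=
    WithLp.toLp 2 (x - toMat D *ᵥ α)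
  have residual_lip : LipschitzWith A residual := LipschitzWith.of_dist_le_mul fun D D' => by
    have : residual D - residual D' = WithLp.toLp 2 (toMat (D' - D) *ᵥ α) := by
      simp only [residual, ← WithLp.toLp_sub]
      congr 1
      rw [show toMat (D' - D) = toMat D' - toMat D from rfl, Matrix.sub_mulVec]
      abel
    rw [dist_eq_norm, this, ← e2_eq_norm, dist_comm, dist_eq_norm]
    exact (e2_mulVec_le _ _).trans (by gcongr)
  have residual_maps : MapsTo residual {D | ‖D‖ ≤ RD} (Metric.closedBall 0 ↑(Rx + RD * A)) := by
    intro D hD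
    rw [mem_closedBall_zero_iff, ← e2_eq_norm, NNReal.coe_add, NNReal.coe_mul]
    refine (e2_sub_le _ _).trans (add_le_add hx ((e2_mulVec_le D α).trans ?_))
    rw [mul_comm]
    exact mul_le_mul hD hα (l1_nonneg α) RD.2
  have h_eq : (fun D => lassoObjective lam x (toMat D) α) =
      fun D => 1 / 2 * ‖residual D‖ ^ 2 + lam * l1 α := by
    simp only [lassoObjective, e2_eq_norm, residual]
  rw [h_eq]
  simpa only [add_zero, Function.comp_apply] using
    ((lipschitzOnWith_half_sq_norm _).comp residual_lip.lipschitzOnWith residual_maps).add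
      (LipschitzWith.const (lam * l1 α)).lipschitzOnWith

theorem stmt5_general {m k : ℕ} (lam : ℝ) (hlam : 0 < lam) (Rx RD : ℝ) :
    ∃ L : NNReal, ∀ x : Fin m → ℝ, e2 x ≤ Rx →
      LipschitzOnWith L (fun D : EuclideanSpace ℝ (Fin m × Fin k) => ellLoss lam x (toMat D))
        {D : EuclideanSpace ℝ (Fin m × Fin k) | ‖D‖ ≤ RD} := by
  set A : ℝ≥0 := (Rx ^ 2 / 2 / lam).toNNReal
  refine ⟨(Rx.toNNReal + RD.toNNReal * A) * A, fun x hx => ?_⟩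
  have hA : 1 / 2 * e2 x ^ 2 ≤ lam * A := by
    have hsq : e2 x ^ 2 ≤ Rx ^ 2 := pow_le_pow_left₀ (Real.sqrt_nonneg _) hx 2
    calc 1 / 2 * e2 x ^ 2 ≤ lam * (Rx ^ 2 / 2 / lam) := by
          rw [mul_div_cancel₀ _ hlam.ne']; linarith
      _ ≤ lam * A := by gcongr; exact Real.le_coe_toNNReal _
  have : Nonempty {α : Fin k → ℝ // l1 α ≤ A} := ⟨⟨0, by simp [l1]⟩⟩
  simp only [ellLoss_eq_ciInf_l1_le hlam hA]
  refine LipschitzOnWith.mono (t := {D | ‖D‖ ≤ RD.toNNReal}) ?_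
    fun D (hD : ‖D‖ ≤ RD) => hD.trans (Real.le_coe_toNNReal RD)
  exact LipschitzOnWith.ciInf
    (fun α => lipschitzOnWith_lassoObjective lam (hx.trans (Real.le_coe_toNNReal Rx)) α.2)
    fun D _ => (bddBelow_range_lassoObjective hlam.le x (toMat D)).mono
      (by rintro _ ⟨α, rfl⟩; exact mem_range_self α.1)

/-- For bounded samples and dictionaries, `D ↦ ℓ(x, D)` is Lipschitz on the bounded
dictionary set, uniformly in `x`, with a constant depending only on the bounds and `λ`. -/
theorem stmt5 {m k : ℕ} (lam : ℝ) (hlam : 0 < lam) (Rx RD : ℝ) (hRx : 0 ≤ Rx) (hRD : 0 ≤ RD) :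
    ∃ L : NNReal, ∀ x : Fin m → ℝ, e2 x ≤ Rx →
      LipschitzOnWith L (fun D : EuclideanSpace ℝ (Fin m × Fin k) => ellLoss lam x (toMat D))
        {D : EuclideanSpace ℝ (Fin m × Fin k) | ‖D‖ ≤ RD} :=
  stmt5_general lam hlam Rx RD
end

section
/- Let (Δ_t)_{t≥1} be a sequence of nonnegative reals satisfying Δ_t ≤ Δ_{t−1} − V Δ_{t−1}^{(m+2)/2} + C/t for constants V, C > 0 and integer m ≥ 1, with Δ_t uniformly bounded. Then Δ_t = O(t^{−2/(m+2)}), i.e., there exists a constant K such that Δ_t ≤ K t^{−2/(m+2)} for all t ≥ 1. -/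
/-!
Set `p = (m + 2) / 2 > 1`, so that the claimed rate is `t ^ (-1 / p)`. Choose `K` so large that
`K + C ≤ V (K / 2) ^ p`, which is possible because `p > 1`, and prove `Δ t ≤ K t ^ (-1 / p)` by
induction. If `Δ t` is at most half of the target `K (t + 1) ^ (-1 / p)`, the increment `C / (t + 1)`
covers the other half. Otherwise the drift `V Δ t ^ p` is at least `V (K / 2) ^ p / (t + 1)`, which
absorbs both the increment and the decrease `K t ^ (-1 / p) - K (t + 1) ^ (-1 / p) ≤ K / (t + 1)`
of the target.
-/

open Filter Real

lemma eventually_add_le_mul_half_rpow {p V : ℝ} (hp : 1 < p) (hV : 0 < V) (C : ℝ) :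
    ∀ᶠ K in atTop, K + C ≤ V * (K / 2) ^ p := by
  have hgrowth : Tendsto (fun K : ℝ => (K / 2) ^ (p - 1)) atTop atTop :=
    (tendsto_rpow_atTop (by linarith)).comp (tendsto_id.atTop_div_const two_pos)
  filter_upwards [hgrowth.eventually_ge_atTop (4 / V), eventually_ge_atTop C,
    eventually_gt_atTop 0] with K hKgrowth hKC hK0
  have hsplit : (K / 2) ^ p = K / 2 * (K / 2) ^ (p - 1) := by
    rw [rpow_sub_one (by positivity)]
    field_simp
  calc K + C ≤ K / 2 * (V * (4 / V)) := by field_simp; linarith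
    _ ≤ K / 2 * (V * (K / 2) ^ (p - 1)) := by gcongr
    _ = V * (K / 2) ^ p := by rw [hsplit]; ring

lemma rpow_neg_sub_rpow_neg_add_one_le {T α : ℝ} (hT : 1 ≤ T) (hα₀ : 0 ≤ α) (hα₁ : α ≤ 1) :
    T ^ (-α) - (T + 1) ^ (-α) ≤ (T + 1)⁻¹ := by
  have hT₀ : 0 < T := by linarith
  have hmono : T ^ (1 - α) ≤ (T + 1) ^ (1 - α) := by gcongr; linarith
  rw [sub_eq_add_neg, rpow_add hT₀, rpow_add (by linarith), rpow_one, rpow_one] at hmono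
  have hle_one : T ^ (-α) ≤ 1 := rpow_le_one_of_one_le_of_nonpos hT (by linarith)
  rw [← one_div, le_div_iff₀ (by linarith)]
  linarith

lemma mul_rpow_neg_inv_rpow {a s p : ℝ} (ha : 0 ≤ a) (hs : 0 ≤ s) (hp : p ≠ 0) :
    (a * s ^ (-p⁻¹)) ^ p = a ^ p * s⁻¹ := by
  rw [mul_rpow ha (rpow_nonneg hs _), ← rpow_mul hs, neg_mul, inv_mul_cancel₀ hp, rpow_neg_one]

section Recurrence

variable {p V C K : ℝ}

lemma le_mul_rpow_neg_inv_add_one_of_step (hp : 1 ≤ p) (hV : 0 < V)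
    (hK : K + C ≤ V * (K / 2) ^ p) (hCK : 2 * C ≤ K) {T x y : ℝ} (hT : 1 ≤ T) (hx₀ : 0 ≤ x)
    (hx : x ≤ K * T ^ (-p⁻¹)) (hy : y ≤ x - V * x ^ p + C / (T + 1)) :
    y ≤ K * (T + 1) ^ (-p⁻¹) := by
  have hT₁ : 0 < T + 1 := by linarith
  have hK₀ : 0 ≤ K := nonneg_of_mul_nonneg_left (hx₀.trans hx) (rpow_pos_of_pos (by linarith) _)
  rcases le_or_gt x (K / 2 * (T + 1) ^ (-p⁻¹)) with hsmall | hlarge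
  · have hdrift : 0 ≤ V * x ^ p := mul_nonneg hV.le (rpow_nonneg hx₀ p)
    have hinv_le : (T + 1)⁻¹ ≤ (T + 1) ^ (-p⁻¹) := by
      rw [← rpow_neg_one]
      exact rpow_le_rpow_of_exponent_le (by linarith) (by simpa using inv_le_one_of_one_le₀ hp)
    have hincr : C / (T + 1) ≤ K / 2 * (T + 1) ^ (-p⁻¹) := by
      calc C / (T + 1) ≤ K / 2 / (T + 1) := by gcongr; linarith
        _ = K / 2 * (T + 1)⁻¹ := div_eq_mul_inv _ _
        _ ≤ K / 2 * (T + 1) ^ (-p⁻¹) := by gcongr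
    linarith
  · have hdrift : (K / 2) ^ p * (T + 1)⁻¹ ≤ x ^ p := by
      rw [← mul_rpow_neg_inv_rpow (by positivity) hT₁.le (by positivity)]
      exact rpow_le_rpow (by positivity) hlarge.le (by linarith)
    have htarget : K * T ^ (-p⁻¹) ≤ K * (T + 1) ^ (-p⁻¹) + K * (T + 1)⁻¹ := by
      have := mul_le_mul_of_nonneg_left (rpow_neg_sub_rpow_neg_add_one_le hT
        (inv_nonneg.2 (by linarith)) (inv_le_one_of_one_le₀ hp)) hK₀
      rw [mul_sub] at this
      linarith
    have hdrift' : (K + C) * (T + 1)⁻¹ ≤ V * x ^ p := by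
      calc (K + C) * (T + 1)⁻¹ ≤ V * (K / 2) ^ p * (T + 1)⁻¹ := by gcongr
        _ ≤ V * x ^ p := by rw [mul_assoc]; gcongr
    rw [div_eq_mul_inv] at hy
    linarith

lemma le_mul_rpow_neg_inv_of_recurrence (hp : 1 ≤ p) (hV : 0 < V)
    (hK : K + C ≤ V * (K / 2) ^ p) (hCK : 2 * C ≤ K) {Δ : ℕ → ℝ} (hnn : ∀ t, 0 ≤ Δ t)
    (h₁ : Δ 1 ≤ K) (hrec : ∀ t : ℕ, 1 ≤ t → Δ (t + 1) ≤ Δ t - V * Δ t ^ p + C / (t + 1)) :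
    ∀ t : ℕ, 1 ≤ t → Δ t ≤ K * (t : ℝ) ^ (-p⁻¹) := by
  intro t ht
  induction t, ht using Nat.le_induction with
  | base => simpa using h₁
  | succ t ht ih =>
    push_cast
    exact le_mul_rpow_neg_inv_add_one_of_step hp hV hK hCK (by exact_mod_cast ht) (hnn t) ih
      (hrec t ht)

end Recurrence

theorem stmt8_general (m : ℕ) (hm : 1 ≤ m) (Δ : ℕ → ℝ) (V C : ℝ)
    (hV : 0 < V)
    (hnn : ∀ t, 0 ≤ Δ t)
    (hrec : ∀ t : ℕ, 1 ≤ t →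
      Δ t ≤ Δ (t - 1) - V * Δ (t - 1) ^ (((m : ℝ) + 2) / 2) + C / t) :
    ∃ K : ℝ, ∀ t : ℕ, 1 ≤ t → Δ t ≤ K * (t : ℝ) ^ (-(2 : ℝ) / ((m : ℝ) + 2)) := by
  set p : ℝ := ((m : ℝ) + 2) / 2 with hp_def
  have hp : 1 < p := by
    have : (1 : ℝ) ≤ m := by exact_mod_cast hm
    linarith
  have hexp : -(2 : ℝ) / ((m : ℝ) + 2) = -p⁻¹ := by rw [hp_def, inv_div, neg_div]
  obtain ⟨K, hK, hΔ₁, hCK⟩ := ((eventually_add_le_mul_half_rpow hp hV C).and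
    ((eventually_ge_atTop (Δ 1)).and (eventually_ge_atTop (2 * C)))).exists
  refine ⟨K, hexp ▸ le_mul_rpow_neg_inv_of_recurrence hp.le hV hK hCK hnn hΔ₁ fun t ht => ?_⟩
  simpa using hrec (t + 1) (by omega)

/-- A nonnegative bounded sequence satisfying the recurrence
`Δ_t ≤ Δ_{t−1} − V Δ_{t−1}^{(m+2)/2} + C/t` decreases at rate `O(t^{−2/(m+2)})`. -/
theorem stmt8 (m : ℕ) (hm : 1 ≤ m) (Δ : ℕ → ℝ) (V C M : ℝ)
    (hV : 0 < V) (hC : 0 < C)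
    (hnn : ∀ t, 0 ≤ Δ t) (hbd : ∀ t, Δ t ≤ M)
    (hrec : ∀ t : ℕ, 1 ≤ t →
      Δ t ≤ Δ (t - 1) - V * Δ (t - 1) ^ (((m : ℝ) + 2) / 2) + C / t) :
    ∃ K : ℝ, ∀ t : ℕ, 1 ≤ t → Δ t ≤ K * (t : ℝ) ^ (-(2 : ℝ) / ((m : ℝ) + 2)) :=
  stmt8_general m hm Δ V C hV hnn hrec
end

section
/- Suppose (a_t)_{t≥1} is a sequence of nonnegative reals such that Σ_{t≥1} a_t/(t+1) < ∞ and |a_{t+1} − a_t| ≤ C/t for some constant C > 0. Then a_t → 0 as t → ∞. -/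
/-!
If `a t ≥ ε`, the increment bound keeps `a ≥ ε / 2` on the window `[t, t + K t]` with
`K = ε / (2 C)`. The weights `1 / (s + 1)` on that window add up to at least `K / (K + 1)`,
so the block of the series starting at `t` is at least `(ε / 2) · K / (K + 1)`. The tails of a
convergent series tend to `0`, so this can happen only for finitely many `t`.
-/

open Filter Finset

lemma sub_mul_le_of_forall_sub_succ_le {a : ℕ → ℝ} {t n : ℕ} {d : ℝ}
    (h : ∀ k < n, a (k + t) - a (k + 1 + t) ≤ d) : a t - n * d ≤ a (n + t) := by
  induction n with
  | zero => simp
  | succ n ih =>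
    have hlast := h n n.lt_succ_self
    have hprev := ih fun k hk => h k (hk.trans n.lt_succ_self)
    push_cast
    linarith

lemma sub_mul_div_le_of_abs_sub_le {a : ℕ → ℝ} {C : ℝ} (hC : 0 ≤ C)
    (hinc : ∀ s : ℕ, 1 ≤ s → |a (s + 1) - a s| ≤ C / s) {t : ℕ} (ht : 1 ≤ t) (n : ℕ) :
    a t - n * (C / t) ≤ a (n + t) := by
  refine sub_mul_le_of_forall_sub_succ_le fun k _ => ?_
  have hstep := neg_le_of_abs_le (hinc (k + t) (by omega))
  have hmono : C / ((k + t : ℕ) : ℝ) ≤ C / t :=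
    div_le_div_of_nonneg_left hC (by positivity) (by simp)
  rw [Nat.add_right_comm]
  linarith

lemma mul_div_le_sum_div {a : ℕ → ℝ} {c : ℝ} (hc : 0 ≤ c) {t n : ℕ}
    (h : ∀ k < n, c ≤ a (k + t)) :
    c * (n / (n + t)) ≤ ∑ k ∈ range n, a (k + t) / ((k + t : ℕ) + 1) := by
  have hterm : ∀ k ∈ range n, c / (n + t) ≤ a (k + t) / ((k + t : ℕ) + 1) := by
    intro k hk
    rw [mem_range] at hk
    have hkn : ((k + t : ℕ) : ℝ) + 1 ≤ n + t := by exact_mod_cast (by omega : k + t + 1 ≤ n + t)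
    exact div_le_div₀ (hc.trans (h k hk)) (h k hk) (by positivity) hkn
  calc c * (n / (n + t)) = (range n).card • (c / (n + t)) := by
        rw [card_range, nsmul_eq_mul]; ring
    _ ≤ _ := card_nsmul_le_sum _ _ _ hterm

lemma le_sum_div_of_abs_sub_le {a : ℕ → ℝ} {C ε K : ℝ} (hC : 0 ≤ C) (hK : 0 < K)
    (hCK : C * K ≤ ε / 2) (hinc : ∀ s : ℕ, 1 ≤ s → |a (s + 1) - a s| ≤ C / s) {t : ℕ}
    (ht : 1 ≤ t) (hat : ε ≤ a t) :
    ε / 2 * (K / (K + 1)) ≤ ∑ k ∈ range (⌊K * t⌋₊ + 1), a (k + t) / ((k + t : ℕ) + 1) := by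
  have hε : 0 ≤ ε := by nlinarith [mul_nonneg hC hK.le]
  set n := ⌊K * t⌋₊ + 1
  have hn : K * t < n := by simpa [n] using Nat.lt_floor_add_one (K * t)
  have hhalf : ∀ k < n, ε / 2 ≤ a (k + t) := by
    intro k hk
    have hkK : (k : ℝ) ≤ K * t := (Nat.le_floor_iff (by positivity)).1 (by omega)
    have hdrop : k * (C / t) ≤ ε / 2 := by
      rw [mul_div_assoc', div_le_iff₀ (by positivity)]
      calc k * C ≤ K * t * C := by gcongr
        _ ≤ ε / 2 * t := by nlinarith [(Nat.cast_nonneg t : (0 : ℝ) ≤ t)]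
    linarith [sub_mul_div_le_of_abs_sub_le hC hinc ht k]
  have hlen : K / (K + 1) ≤ n / (n + t) := by
    rw [div_le_div_iff₀ (by positivity) (by positivity)]
    nlinarith
  calc ε / 2 * (K / (K + 1)) ≤ ε / 2 * (n / (n + t)) := by gcongr
    _ ≤ _ := mul_div_le_sum_div (by positivity) hhalf

/-- If `Σ a_t/(t+1) < ∞` for a nonnegative sequence with `|a_{t+1} − a_t| ≤ C/t`,
then `a_t → 0`. -/
theorem stmt9 (a : ℕ → ℝ) (C : ℝ) (hC : 0 < C)
    (hnn : ∀ t, 0 ≤ a t)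
    (hsum : Summable fun t : ℕ => a t / (t + 1))
    (hinc : ∀ t : ℕ, 1 ≤ t → |a (t + 1) - a t| ≤ C / t) :
    Filter.Tendsto a Filter.atTop (nhds 0) := by
  refine tendsto_order.2 ⟨fun b hb => .of_forall fun t => hb.trans_le (hnn t), fun ε hε => ?_⟩
  set K := ε / (2 * C)
  have hK : 0 < K := by positivity
  have hCK : C * K ≤ ε / 2 := le_of_eq (by simp only [K]; field_simp)
  have hδ : 0 < ε / 2 * (K / (K + 1)) := by positivity
  filter_upwards [(tendsto_sum_nat_add fun s : ℕ => a s / (s + 1)).eventually (gt_mem_nhds hδ),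
    eventually_ge_atTop 1] with t htail ht
  by_contra! hat
  have hblock := le_sum_div_of_abs_sub_le hC.le hK hCK hinc ht hat
  have htsum := ((summable_nat_add_iff t).2 hsum).sum_le_tsum (range (⌊K * t⌋₊ + 1))
    fun s _ => div_nonneg (hnn _) (by positivity)
  linarith
end
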